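/- arXiv:2101.11163 — 5 statements merged into one kernel-verified Lean document; each statement's English description precedes it below -/
import Mathlib

section
/- Fix reals 0 < ω_l < ω_h, integers n ≥ 1, k ≥ 1, and α ∈ (0,1). Let σ_i = ω_l·(ω_h/ω_l)^{(i−1)/n} for i = 1,…,n+1, and suppose p_1,…,p_n, z_1,…,z_n, ρ_1,…,ρ_n are positive reals satisfying, for every i = 1,…,n: (a) lg ρ_i − lg p_i = lg z_i − lg ρ_i; (b) 2·lg ρ_i = lg σ_i + lg σ_{i+1}; and (c) lg ρ_i − lg p_i = (α/k)·(lg ρ_i − lg σ_i). Then necessarily p_i = ω_l·(ω_h/ω_l)^{(2i−1−α/k)/(2n)} and z_i = ω_l·(ω_h/ω_l)^{(2i−1+α/k)/(2n)} for every i = 1,…,n. -/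
open Finset

private lemma lb_mul_rpow (x y e : ℝ) (hx : 0 < x) (hy : 0 < y) :
    Real.logb 10 (x * y ^ e) = Real.logb 10 x + e * Real.logb 10 y := by
  rw [Real.logb, Real.log_mul hx.ne' (ne_of_gt (Real.rpow_pos_of_pos hy e)),
    Real.log_rpow hy, Real.logb, Real.logb]
  ring

/-- The crossing points `σ_i = ω_l·(ω_h/ω_l)^{(i−1)/n}` for `i = 1,…,n+1`. -/
noncomputable def crossPt (ωl ωh : ℝ) (n : ℕ) (i : ℕ) : ℝ :=
  ωl * (ωh / ωl) ^ (((i : ℝ) - 1) / (n : ℝ))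

/-- Two-point boundary value construction for the low-order piece (crossing points as boundary
points): the triangle-congruence relations (7), (8), (10) force the pole and zero formulas of
Algorithm 1. -/
theorem stmt_5 (ωl ωh : ℝ) (hωl : 0 < ωl) (hlh : ωl < ωh) (n k : ℕ) (hn : 1 ≤ n) (hk : 1 ≤ k)
    (α : ℝ) (hα : α ∈ Set.Ioo (0 : ℝ) 1)
    (p z ρ : ℕ → ℝ)
    (hp : ∀ i ∈ Icc 1 n, 0 < p i) (hz : ∀ i ∈ Icc 1 n, 0 < z i)
    (hρ : ∀ i ∈ Icc 1 n, 0 < ρ i)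
    (ha : ∀ i ∈ Icc 1 n,
      Real.logb 10 (ρ i) - Real.logb 10 (p i) = Real.logb 10 (z i) - Real.logb 10 (ρ i))
    (hb : ∀ i ∈ Icc 1 n,
      2 * Real.logb 10 (ρ i) =
        Real.logb 10 (crossPt ωl ωh n i) + Real.logb 10 (crossPt ωl ωh n (i + 1)))
    (hc : ∀ i ∈ Icc 1 n,
      Real.logb 10 (ρ i) - Real.logb 10 (p i) =
        (α / (k : ℝ)) * (Real.logb 10 (ρ i) - Real.logb 10 (crossPt ωl ωh n i))) :
    ∀ i ∈ Icc 1 n,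
      p i = ωl * (ωh / ωl) ^ ((2 * (i : ℝ) - 1 - α / (k : ℝ)) / (2 * (n : ℝ))) ∧
      z i = ωl * (ωh / ωl) ^ ((2 * (i : ℝ) - 1 + α / (k : ℝ)) / (2 * (n : ℝ))) := by
  intro i hi
  have hr : (0:ℝ) < ωh / ωl := div_pos (hωl.trans hlh) hωl
  have hn0 : (n:ℝ) ≠ 0 := by positivity
  have hk0 : (k:ℝ) ≠ 0 := by positivity
  set A := Real.logb 10 ωl with hA
  set R := Real.logb 10 (ωh / ωl) with hR
  have hσ : ∀ j : ℕ, Real.logb 10 (crossPt ωl ωh n j) = A + (((j:ℝ) - 1) / n) * R := by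
    intro j; exact lb_mul_rpow _ _ _ hωl hr
  have hbi := hb i hi
  rw [hσ i, hσ (i+1)] at hbi
  push_cast at hbi
  have hci := hc i hi
  rw [hσ i] at hci
  have hρval : Real.logb 10 (ρ i) = A + ((2 * (i:ℝ) - 1) / (2 * n)) * R := by
    field_simp at hbi
    field_simp
    linarith
  have hpval : Real.logb 10 (p i) =
      A + ((2 * (i:ℝ) - 1 - α / k) / (2 * n)) * R := by
    rw [hρval] at hci
    linear_combination -hci
  have hzval : Real.logb 10 (z i) =
      A + ((2 * (i:ℝ) - 1 + α / k) / (2 * n)) * R := by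
    have hai := ha i hi
    rw [hρval, hpval] at hai
    linear_combination -hai
  have inj := Real.logb_injOn_pos (b := 10) (by norm_num)
  constructor
  · apply inj (Set.mem_Ioi.mpr (hp i hi)) (Set.mem_Ioi.mpr (by positivity))
    rw [hpval, lb_mul_rpow _ _ _ hωl hr]
  · apply inj (Set.mem_Ioi.mpr (hz i hi)) (Set.mem_Ioi.mpr (by positivity))
    rw [hzval, lb_mul_rpow _ _ _ hωl hr]
end

section
/- Fix reals 0 < ω_l < ω_h, integers n ≥ 1, k ≥ 1, and α ∈ (0,1). Let ϱ_i = ω_l·(ω_h/ω_l)^{(i−1)/n} for i = 1,…,n+1, and suppose p̄_1,…,p̄_n, z̄_1,…,z̄_n, δ_1,…,δ_n are positive reals satisfying, for every i = 1,…,n: (a) lg δ_i − lg z̄_i = lg p̄_i − lg δ_i; (b) 2·lg δ_i = lg ϱ_i + lg ϱ_{i+1}; and (c) 2·(lg z̄_i − lg ϱ_i) = α·(lg ϱ_{i+1} − lg ϱ_i) + (k−1)·(lg p̄_i − lg z̄_i). Then necessarily p̄_i = ω_l·(ω_h/ω_l)^{(2i−1+1/k−α/k)/(2n)} and z̄_i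 = ω_l·(ω_h/ω_l)^{(2i−1−1/k+α/k)/(2n)} for every i = 1,…,n. -/
open Finset

private lemma logb_mul_rpow (a x : ℝ) (ha : 0 < a) (hx : 0 < x) (e : ℝ) :
    Real.logb 10 (a * x ^ e) = Real.logb 10 a + e * Real.logb 10 x := by
  unfold Real.logb
  rw [Real.log_mul (ne_of_gt ha) (by positivity), Real.log_rpow hx]
  ring

/-- Two-point boundary value construction for the high-order piece (crossing points as boundary
points): the triangle-congruence relations (12), (13), (14) force the pole and zero formulas
`p̄_i`, `z̄_i` of Algorithm 1. -/
theorem stmt_6 (ωl ωh : ℝ) (hωl : 0 < ωl) (hlh : ωl < ωh) (n k : ℕ) (hn : 1 ≤ n) (hk : 1 ≤ k)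
    (α : ℝ) (hα : α ∈ Set.Ioo (0 : ℝ) 1)
    (pbar zbar δ : ℕ → ℝ)
    (hpbar : ∀ i ∈ Icc 1 n, 0 < pbar i) (hzbar : ∀ i ∈ Icc 1 n, 0 < zbar i)
    (hδ : ∀ i ∈ Icc 1 n, 0 < δ i)
    (ha : ∀ i ∈ Icc 1 n,
      Real.logb 10 (δ i) - Real.logb 10 (zbar i) = Real.logb 10 (pbar i) - Real.logb 10 (δ i))
    (hb : ∀ i ∈ Icc 1 n,
      2 * Real.logb 10 (δ i) =
        Real.logb 10 (crossPt ωl ωh n i) + Real.logb 10 (crossPt ωl ωh n (i + 1)))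
    (hc : ∀ i ∈ Icc 1 n,
      2 * (Real.logb 10 (zbar i) - Real.logb 10 (crossPt ωl ωh n i)) =
        α * (Real.logb 10 (crossPt ωl ωh n (i + 1)) - Real.logb 10 (crossPt ωl ωh n i)) +
          ((k : ℝ) - 1) * (Real.logb 10 (pbar i) - Real.logb 10 (zbar i))) :
    ∀ i ∈ Icc 1 n,
      pbar i = ωl * (ωh / ωl) ^ ((2 * (i : ℝ) - 1 + 1 / (k : ℝ) - α / (k : ℝ)) / (2 * (n : ℝ))) ∧
      zbar i = ωl * (ωh / ωl) ^ ((2 * (i : ℝ) - 1 - 1 / (k : ℝ) + α / (k : ℝ)) / (2 * (n : ℝ))) := by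
  intro i hi
  have hr : (0:ℝ) < ωh / ωl := div_pos (hωl.trans hlh) hωl
  have hk0 : (k:ℝ) ≠ 0 := Nat.cast_ne_zero.mpr (by omega)
  have hn0 : (n:ℝ) ≠ 0 := Nat.cast_ne_zero.mpr (by omega)
  have h1 := ha i hi
  have h2 := hb i hi
  have h3 := hc i hi
  have hcp : ∀ j : ℕ, Real.logb 10 (crossPt ωl ωh n j)
      = Real.logb 10 ωl + (((j:ℝ) - 1) / (n:ℝ)) * Real.logb 10 (ωh / ωl) := fun j =>
    logb_mul_rpow _ _ hωl hr _
  rw [hcp i, hcp (i+1)] at h2 h3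
  push_cast at h2 h3
  have hkk : (k:ℝ) * ((k:ℝ))⁻¹ = 1 := mul_inv_cancel₀ hk0
  have hLz : Real.logb 10 (zbar i) = Real.logb 10 ωl +
      ((2 * (i : ℝ) - 1 - 1 / (k : ℝ) + α / (k : ℝ)) / (2 * (n : ℝ))) * Real.logb 10 (ωh / ωl) := by
    linear_combination (1/(2*(k:ℝ))) * h3 - (((k:ℝ)-1)/(2*(k:ℝ))) * h1 + (((k:ℝ)-1)/(2*(k:ℝ))) * h2
      + (Real.logb 10 ωl + ((i:ℝ)/(n:ℝ)) * Real.logb 10 (ωh/ωl)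
          - (1/(2*(n:ℝ))) * Real.logb 10 (ωh/ωl) - Real.logb 10 (zbar i)) * hkk
  have hLp : Real.logb 10 (pbar i) = Real.logb 10 ωl +
      ((2 * (i : ℝ) - 1 + 1 / (k : ℝ) - α / (k : ℝ)) / (2 * (n : ℝ))) * Real.logb 10 (ωh / ωl) := by
    linear_combination h2 - h1 - hLz
  have hinj := Real.logb_injOn_pos (b := 10) (by norm_num)
  constructor
  · refine hinj (Set.mem_Ioi.mpr (hpbar i hi)) (Set.mem_Ioi.mpr (by positivity)) ?_
    rw [logb_mul_rpow _ _ hωl hr, hLp]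
  · refine hinj (Set.mem_Ioi.mpr (hzbar i hi)) (Set.mem_Ioi.mpr (by positivity)) ?_
    rw [logb_mul_rpow _ _ hωl hr, hLz]
end

section
/- Fix reals 0 < ω_l < ω_h, integers n ≥ 1, k ≥ 1, and α ∈ (0,1). Suppose p_1,…,p_n, z_1,…,z_n, ρ_1,…,ρ_n and σ_1,…,σ_{n+1} are positive reals satisfying, for every i = 1,…,n: (a) lg ρ_i − lg p_i = lg z_i − lg ρ_i; (b) 2·lg ρ_i = lg σ_i + lg σ_{i+1}; (c) lg ρ_i − lg p_i = (α/k)·(lg ρ_i − lg σ_i); together with the congruence condition that lg ρ_i − lg σ_i is the same for all i, and the boundary conditions p_1 = ω_l and z_n = ω_h. Then necessarily p_i = ω_l·(ω_h/ω_l)^{(i−1)/(n−1+α/k)} and z_i = ω_l·(ω_h/ω_l)^{(i−1+α/k)/(n−1+α/k)} for every i = 1,…,n. -/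
open Finset

lemma logb_aux (x y t : ℝ) (hx : 0 < x) (hy : 0 < y) :
    Real.logb 10 (x * y ^ t) = Real.logb 10 x + t * Real.logb 10 y := by
  rw [Real.logb, Real.logb, Real.logb,
    Real.log_mul hx.ne' (Real.rpow_pos_of_pos hy t).ne', Real.log_rpow hy]
  ring

lemma eq_of_logb_eq (x y : ℝ) (hx : 0 < x) (hy : 0 < y)
    (h : Real.logb 10 x = Real.logb 10 y) : x = y :=
  Real.logb_injOn_pos (by norm_num : (1:ℝ) < 10) (Set.mem_Ioi.mpr hx) (Set.mem_Ioi.mpr hy) h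

/-- Two-point boundary value construction with the turning points as boundary points
(`p_1 = ω_l`, `z_n = ω_h`): the triangle-congruence relations (7), (8), (10) force
the pole and zero formulas of Algorithm 2. -/
theorem stmt_10 (ωl ωh : ℝ) (hωl : 0 < ωl) (hlh : ωl < ωh) (n k : ℕ) (hn : 1 ≤ n) (hk : 1 ≤ k)
    (α : ℝ) (hα : α ∈ Set.Ioo (0 : ℝ) 1)
    (p z ρ σ : ℕ → ℝ)
    (hp : ∀ i ∈ Icc 1 n, 0 < p i) (hz : ∀ i ∈ Icc 1 n, 0 < z i)
    (hρ : ∀ i ∈ Icc 1 n, 0 < ρ i) (hσ : ∀ i ∈ Icc 1 (n + 1), 0 < σ i)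
    (ha : ∀ i ∈ Icc 1 n,
      Real.logb 10 (ρ i) - Real.logb 10 (p i) = Real.logb 10 (z i) - Real.logb 10 (ρ i))
    (hb : ∀ i ∈ Icc 1 n,
      2 * Real.logb 10 (ρ i) = Real.logb 10 (σ i) + Real.logb 10 (σ (i + 1)))
    (hc : ∀ i ∈ Icc 1 n,
      Real.logb 10 (ρ i) - Real.logb 10 (p i) =
        (α / (k : ℝ)) * (Real.logb 10 (ρ i) - Real.logb 10 (σ i)))
    (hcong : ∀ i ∈ Icc 1 n, ∀ j ∈ Icc 1 n,
      Real.logb 10 (ρ i) - Real.logb 10 (σ i) = Real.logb 10 (ρ j) - Real.logb 10 (σ j))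
    (hbd1 : p 1 = ωl) (hbd2 : z n = ωh) :
    ∀ i ∈ Icc 1 n,
      p i = ωl * (ωh / ωl) ^ (((i : ℝ) - 1) / ((n : ℝ) - 1 + α / (k : ℝ))) ∧
      z i = ωl * (ωh / ωl) ^ (((i : ℝ) - 1 + α / (k : ℝ)) / ((n : ℝ) - 1 + α / (k : ℝ))) := by
  have hωh : 0 < ωh := hωl.trans hlh
  have hk' : (0:ℝ) < k := by exact_mod_cast hk
  set c : ℝ := α / k with hc0
  have hcpos : 0 < c := div_pos hα.1 hk'
  set d : ℝ := Real.logb 10 (ρ 1) - Real.logb 10 (σ 1) with hd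
  have hmem : ∀ j, 1 ≤ j → j ≤ n → j ∈ Icc 1 n := fun j h1 h2 => mem_Icc.mpr ⟨h1, h2⟩
  have hdall : ∀ j ∈ Icc 1 n, Real.logb 10 (ρ j) - Real.logb 10 (σ j) = d :=
    fun j hj => hcong j hj 1 (hmem 1 le_rfl hn)
  have hpstep : ∀ j, 1 ≤ j → j + 1 ≤ n →
      Real.logb 10 (p (j+1)) = Real.logb 10 (p j) + 2*d := by
    intro j h1 h2
    have hj : j ∈ Icc 1 n := hmem j h1 (le_trans (Nat.le_succ j) h2)
    have hj1 : j + 1 ∈ Icc 1 n := hmem _ (by omega) h2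
    have e1 := hc j hj
    have e2 := hc (j+1) hj1
    have e3 := hb j hj
    have e4 := hdall j hj
    have e5 := hdall (j+1) hj1
    rw [e4] at e1
    rw [e5] at e2
    linarith
  have hpL : ∀ j, 1 ≤ j → j ≤ n →
      Real.logb 10 (p j) = Real.logb 10 ωl + ((j:ℝ) - 1) * (2*d) := by
    intro j
    induction j with
    | zero => omega
    | succ m ih =>
      intro _ hm
      rcases Nat.eq_zero_or_pos m with h0 | h1
      · subst h0; simp [hbd1]
      · have hih := ih h1 (by omega)
        rw [hpstep m h1 hm, hih]
        push_cast; ring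
  have hzL : ∀ j ∈ Icc 1 n,
      Real.logb 10 (z j) = Real.logb 10 (p j) + 2*c*d := by
    intro j hj
    have e1 := hc j hj
    have e2 := ha j hj
    have e4 := hdall j hj
    rw [e4] at e1
    linarith
  have hΔ : Real.logb 10 ωh - Real.logb 10 ωl = ((n:ℝ) - 1 + c) * (2*d) := by
    have h1 := hpL n hn le_rfl
    have h2 := hzL n (hmem n hn le_rfl)
    rw [hbd2, h1] at h2
    linear_combination h2
  have hn1 : (1:ℝ) ≤ (n:ℝ) := by exact_mod_cast hn
  have hnepos : 0 < (n:ℝ) - 1 + c := by linarith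
  have hne : (n:ℝ) - 1 + c ≠ 0 := ne_of_gt hnepos
  have key : ∀ t : ℝ, Real.logb 10 (ωl * (ωh/ωl) ^ t)
      = Real.logb 10 ωl + t * (((n:ℝ) - 1 + c) * (2*d)) := by
    intro t
    rw [logb_aux ωl (ωh/ωl) t hωl (div_pos hωh hωl),
      Real.logb_div hωh.ne' hωl.ne', hΔ]
  intro i hi
  have hi' := hi
  rw [mem_Icc] at hi'
  obtain ⟨hi1, hin⟩ := hi'
  have hpLi := hpL i hi1 hin
  have hzLi := hzL i hi
  have hrpos : ∀ t : ℝ, 0 < ωl * (ωh/ωl) ^ t := fun t =>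
    mul_pos hωl (Real.rpow_pos_of_pos (div_pos hωh hωl) t)
  constructor
  · refine eq_of_logb_eq _ _ (hp i hi) (hrpos _) ?_
    rw [key, hpLi]
    congr 1
    field_simp
  · refine eq_of_logb_eq _ _ (hz i hi) (hrpos _) ?_
    rw [key, hzLi, hpLi]
    field_simp
    ring
end

section
/- Fix reals ω_l > 0, ε > 0, an integer k ≥ 1 and a real α with 0 < α < k. Define the lines L_0(ω) = −20α·lg ω, L_1(ω) = ε − 20α·lg ω, L_2(ω) = −ε − 20α·lg ω for ω > 0, and for positive reals h_1,…,h_n set M_i(ω) = 20·lg h_i − 20k·lg ω. Suppose positive reals σ_1,…,σ_{n+1}, p_1,…,p_n, z_1,…,z_n, h_1,…,h_n satisfy: σ_1 = ω_l; L_0(σ_i) = L_1(p_i) for i = 1,…,n; L_0(σ_{i+1}) = L_2(z_i) for i = 1,…,n; and M_i(p_i) = L_1(p_i), M_i(z_i) = L_2(z_i) for i = 1,…,n. Then necessarily p_i = 10^{ε(2ki−k−α)/(20α(k−α))}·ω_l and z_i = 10^{ε(2ki−k+α)/(20α(k−α))}·ω_l for every i = 1,…,n. -/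
open Finset

/-- The Bode magnitude line `L_0(ω) = −20α·lg ω` of `1/s^α`. -/
noncomputable def L0 (α ω : ℝ) : ℝ := -20 * α * Real.logb 10 ω

/-- The Bode magnitude line `L_1(ω) = ε − 20α·lg ω` of `k_1/s^α` with `k_1 = 10^{ε/20}`. -/
noncomputable def L1 (ε α ω : ℝ) : ℝ := ε - 20 * α * Real.logb 10 ω

/-- The Bode magnitude line `L_2(ω) = −ε − 20α·lg ω` of `k_2/s^α` with `k_2 = 10^{−ε/20}`. -/
noncomputable def L2 (ε α ω : ℝ) : ℝ := -ε - 20 * α * Real.logb 10 ω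

/-- The Bode magnitude line `M_i(ω) = 20·lg h_i − 20k·lg ω` of `h_i/s^k`. -/
noncomputable def Mline (k : ℕ) (h ω : ℝ) : ℝ := 20 * Real.logb 10 h - 20 * (k : ℝ) * Real.logb 10 ω

/-- One-point limited distance based method with the crossing point `σ_1 = ω_l` as left
boundary point: the geometric relations (18) force the pole and zero formulas of Algorithm 3. -/
theorem stmt_12 (ωl ε : ℝ) (hωl : 0 < ωl) (hε : 0 < ε) (n k : ℕ) (hn : 1 ≤ n) (hk : 1 ≤ k)
    (α : ℝ) (hα0 : 0 < α) (hαk : α < (k : ℝ))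
    (σ p z h : ℕ → ℝ)
    (hσ : ∀ i ∈ Icc 1 (n + 1), 0 < σ i) (hp : ∀ i ∈ Icc 1 n, 0 < p i)
    (hz : ∀ i ∈ Icc 1 n, 0 < z i) (hh : ∀ i ∈ Icc 1 n, 0 < h i)
    (hbd : σ 1 = ωl)
    (h1 : ∀ i ∈ Icc 1 n, L0 α (σ i) = L1 ε α (p i))
    (h2 : ∀ i ∈ Icc 1 n, L0 α (σ (i + 1)) = L2 ε α (z i))
    (h3 : ∀ i ∈ Icc 1 n, Mline k (h i) (p i) = L1 ε α (p i))
    (h4 : ∀ i ∈ Icc 1 n, Mline k (h i) (z i) = L2 ε α (z i)) :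
    ∀ i ∈ Icc 1 n,
      p i = (10 : ℝ) ^ (ε * (2 * (k : ℝ) * (i : ℝ) - (k : ℝ) - α) /
              (20 * α * ((k : ℝ) - α))) * ωl ∧
      z i = (10 : ℝ) ^ (ε * (2 * (k : ℝ) * (i : ℝ) - (k : ℝ) + α) /
              (20 * α * ((k : ℝ) - α))) * ωl := by
  have hαne : α ≠ 0 := ne_of_gt hα0
  have hkαpos : (0:ℝ) < (k:ℝ) - α := by linarith
  have hkαne : (k:ℝ) - α ≠ 0 := ne_of_gt hkαpos
  have h10pos : (0:ℝ) < 10 := by norm_num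
  have h10ne1 : (10:ℝ) ≠ 1 := by norm_num
  -- log of p in terms of log of σ
  have hlgp : ∀ i ∈ Icc 1 n,
      Real.logb 10 (p i) = Real.logb 10 (σ i) + ε / (20 * α) := by
    intro i hi
    have e1 := h1 i hi
    simp only [L0, L1] at e1
    field_simp
    linarith
  -- log of z in terms of log of p
  have hlgz : ∀ i ∈ Icc 1 n,
      Real.logb 10 (z i) = Real.logb 10 (p i) + ε / (10 * ((k:ℝ) - α)) := by
    intro i hi
    have e3 := h3 i hi
    have e4 := h4 i hi
    simp only [Mline, L1, L2] at e3 e4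
    field_simp
    linarith
  -- key induction on σ
  have key : ∀ i, 1 ≤ i → i ≤ n + 1 →
      Real.logb 10 (σ i) = Real.logb 10 ωl
        + ε * (k:ℝ) * ((i:ℝ) - 1) / (10 * α * ((k:ℝ) - α)) := by
    intro i
    induction i with
    | zero => intro h'; omega
    | succ j ih =>
      intro _ hle
      rcases Nat.eq_zero_or_pos j with rfl | hj
      · rw [hbd]; norm_num
      · have hjn : j ≤ n := by omega
        have hji : j ∈ Icc 1 n := mem_Icc.mpr ⟨hj, hjn⟩
        have ihj := ih hj (by omega)
        have e2 := h2 j hji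
        simp only [L0, L2] at e2
        have hzj := hlgz j hji
        have hpj := hlgp j hji
        -- σ(j+1) from z j
        have hb : Real.logb 10 (σ (j + 1)) = Real.logb 10 (z j) + ε / (20 * α) := by
          field_simp
          linarith
        rw [hb, hzj, hpj, ihj]
        push_cast
        field_simp
        ring
  -- conclusion
  intro i hi
  obtain ⟨hi1, hin⟩ := mem_Icc.mp hi
  have hσi := key i hi1 (by omega)
  have hpi := hlgp i hi
  have hzi := hlgz i hi
  have hppos := hp i hi
  have hzpos := hz i hi
  have hωeq : ωl = (10:ℝ) ^ (Real.logb 10 ωl) := (Real.rpow_logb h10pos h10ne1 hωl).symm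
  constructor
  · have hexp : Real.logb 10 (p i)
        = ε * (2 * (k:ℝ) * (i:ℝ) - (k:ℝ) - α) / (20 * α * ((k:ℝ) - α))
          + Real.logb 10 ωl := by
      rw [hpi, hσi]
      field_simp
      ring
    calc p i = (10:ℝ) ^ (Real.logb 10 (p i)) := (Real.rpow_logb h10pos h10ne1 hppos).symm
      _ = (10:ℝ) ^ (ε * (2 * (k:ℝ) * (i:ℝ) - (k:ℝ) - α) / (20 * α * ((k:ℝ) - α))
            + Real.logb 10 ωl) := by rw [hexp]
      _ = _ := by rw [Real.rpow_add h10pos, ← hωeq]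
  · have hexp : Real.logb 10 (z i)
        = ε * (2 * (k:ℝ) * (i:ℝ) - (k:ℝ) + α) / (20 * α * ((k:ℝ) - α))
          + Real.logb 10 ωl := by
      rw [hzi, hpi, hσi]
      field_simp
      ring
    calc z i = (10:ℝ) ^ (Real.logb 10 (z i)) := (Real.rpow_logb h10pos h10ne1 hzpos).symm
      _ = (10:ℝ) ^ (ε * (2 * (k:ℝ) * (i:ℝ) - (k:ℝ) + α) / (20 * α * ((k:ℝ) - α))
            + Real.logb 10 ωl) := by rw [hexp]
      _ = _ := by rw [Real.rpow_add h10pos, ← hωeq]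
end

section
/- Fix reals ω_l > 0, ε > 0, an integer k ≥ 1 and a real α with 0 < α < k. Define the lines L_0(ω) = −20α·lg ω, L_1(ω) = ε − 20α·lg ω, L_2(ω) = −ε − 20α·lg ω for ω > 0, and for positive reals h_1,…,h_n set M_i(ω) = 20·lg h_i − 20k·lg ω. Suppose positive reals σ_2,…,σ_n, p_1,…,p_n, z_1,…,z_n, h_1,…,h_n satisfy: p_1 = ω_l; L_0(σ_{i+1}) = L_2(z_i) and L_0(σ_{i+1}) = L_1(p_{i+1}) for i = 1,…,n−1; and M_i(p_i) = L_1(p_i), M_i(z_i) = L_2(z_i) for i = 1,…,n. Then necessarily p_i = 10^{εk(i−1)/(10α(k−α))}·ω_l and z_i = 10^{ε(ki−k+α)/(10α(k−α))}·ω_l for every i = 1,…,n. -/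
open Finset

/-- One-point limited distance based method with the turning point `D_1` as the left boundary
point (`p_1 = ω_l`): the geometric relations force the pole and zero formulas of Algorithm 4. -/
theorem stmt_15 (ωl ε : ℝ) (hωl : 0 < ωl) (hε : 0 < ε) (n k : ℕ) (hn : 1 ≤ n) (hk : 1 ≤ k)
    (α : ℝ) (hα0 : 0 < α) (hαk : α < (k : ℝ))
    (σ p z h : ℕ → ℝ)
    (hσ : ∀ i ∈ Icc 2 n, 0 < σ i) (hp : ∀ i ∈ Icc 1 n, 0 < p i)
    (hz : ∀ i ∈ Icc 1 n, 0 < z i) (hh : ∀ i ∈ Icc 1 n, 0 < h i)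
    (hbd : p 1 = ωl)
    (h1 : ∀ i ∈ Icc 1 (n - 1), L0 α (σ (i + 1)) = L2 ε α (z i))
    (h2 : ∀ i ∈ Icc 1 (n - 1), L0 α (σ (i + 1)) = L1 ε α (p (i + 1)))
    (h3 : ∀ i ∈ Icc 1 n, Mline k (h i) (p i) = L1 ε α (p i))
    (h4 : ∀ i ∈ Icc 1 n, Mline k (h i) (z i) = L2 ε α (z i)) :
    ∀ i ∈ Icc 1 n,
      p i = (10 : ℝ) ^ (ε * (k : ℝ) * ((i : ℝ) - 1) / (10 * α * ((k : ℝ) - α))) * ωl ∧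
      z i = (10 : ℝ) ^ (ε * ((k : ℝ) * (i : ℝ) - (k : ℝ) + α) /
              (10 * α * ((k : ℝ) - α))) * ωl := by

  have hkα : (0:ℝ) < (k:ℝ) - α := by linarith
  have hα : α ≠ 0 := ne_of_gt hα0
  have hkα' : (k:ℝ) - α ≠ 0 := ne_of_gt hkα
  set c : ℝ := ε / (10 * ((k:ℝ) - α)) with hc
  set d : ℝ := ε / (10 * α) with hd
  -- z-p relation
  have lzp : ∀ i, 1 ≤ i → i ≤ n →
      Real.logb 10 (z i) = Real.logb 10 (p i) + c := by
    intro i hi1 hin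
    have e3 := h3 i (mem_Icc.mpr ⟨hi1, hin⟩)
    have e4 := h4 i (mem_Icc.mpr ⟨hi1, hin⟩)
    simp only [Mline, L1, L2] at e3 e4
    have hq : Real.logb 10 (z i) - Real.logb 10 (p i) = ε / (10 * ((k:ℝ) - α)) := by
      rw [eq_div_iff (by positivity)]
      linear_combination (e3 - e4) / 2
    rw [hc]; linarith
  have lpz : ∀ i, 1 ≤ i → i + 1 ≤ n →
      Real.logb 10 (p (i + 1)) = Real.logb 10 (z i) + d := by
    intro i hi1 hin
    have hm : i ∈ Icc 1 (n - 1) := mem_Icc.mpr ⟨hi1, by omega⟩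
    have e1 := h1 i hm
    have e2 := h2 i hm
    simp only [L0, L1, L2] at e1 e2
    have hq : Real.logb 10 (p (i + 1)) - Real.logb 10 (z i) = ε / (10 * α) := by
      rw [eq_div_iff (by positivity)]
      linear_combination (e2 - e1) / 2
    rw [hd]; linarith
  have key : ∀ i, 1 ≤ i → i ≤ n →
      Real.logb 10 (p i) = ((i : ℝ) - 1) * (c + d) + Real.logb 10 ωl := by
    intro i
    induction i with
    | zero => intro h1' _; omega
    | succ j ih =>
      intro _ hjn
      rcases Nat.eq_zero_or_pos j with hj0 | hj1
      · subst hj0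
        rw [hbd]
        push_cast
        ring
      · have hjn' : j ≤ n := by omega
        have ihj := ih hj1 hjn'
        have e1 := lpz j hj1 hjn
        have e2 := lzp j hj1 hjn'
        rw [e1, e2, ihj]
        push_cast
        ring
  intro i hi
  obtain ⟨hi1, hin⟩ := mem_Icc.mp hi
  have hpi := hp i hi
  have hzi := hz i hi
  have hlp := key i hi1 hin
  have hlz : Real.logb 10 (z i) = ((i : ℝ) - 1) * (c + d) + c + Real.logb 10 ωl := by
    rw [lzp i hi1 hin, hlp]; ring
  have h10 : (1:ℝ) < 10 := by norm_num
  constructor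
  · have : p i = (10:ℝ) ^ (Real.logb 10 (p i)) :=
      (Real.rpow_logb (by norm_num) (by norm_num) hpi).symm
    rw [this, hlp, Real.rpow_add (by norm_num), Real.rpow_logb (by norm_num) (by norm_num) hωl]
    congr 2
    rw [hc, hd]
    field_simp
    ring
  · have : z i = (10:ℝ) ^ (Real.logb 10 (z i)) :=
      (Real.rpow_logb (by norm_num) (by norm_num) hzi).symm
    rw [this, hlz]
    rw [Real.rpow_add (by norm_num), Real.rpow_logb (by norm_num) (by norm_num) hωl]
    congr 2
    rw [hc, hd]
    field_simp
    ring
end
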